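/- arXiv:2102.12029 — 4 statements merged into one kernel-verified Lean document; each statement's English description precedes it below -/
import Mathlib

section
/- Let I be a finite index set, and let n > 0, k > 0 and, for all i, j ∈ I, N_i > 0 and N_{ij} > 0 be real numbers. For a real matrix M = (M_{ij})_{i,j∈I} define the skip-gram negative-sampling (SGNS) loss ℓ(M) = −Σ_{i,j∈I} [ N_{ij}·log σ(M_{ij}) + (k/n)·N_i·N_j·log σ(−M_{ij}) ]. Define the shifted relatedness matrix R̃_{ij} = log( n·N_{ij} / (k·N_i·N_j) ) and the weights m_{ij} = N_{ij} + (k/n)·N_i·N_j. Then for every real matrix M, ℓ(M) − ℓ(R̃) = Σ_{i,j∈I} m_{ij} · D_KL( σ(R̃_{ij}) ‖ σ(M_{ij}) ); that is, the excess SGNS loss of M over the loss at R̃ equals the weighted sum of KL divergences between the Bernoulli co-occurrence distributions induced by R̃ and by M. -/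
/-!
Work cell by cell. With `p = N_ij` and `q = (k/n) N_i N_j` one has `σ(R̃_ij) = p / (p + q)`, so
`p` and `q` are the masses `m_ij σ(R̃_ij)` and `m_ij (1 - σ(R̃_ij))`. The excess of the cell's
logistic loss `-(p log σ(M) + q log σ(-M))` over its value at `R̃` is therefore `m_ij` times
cross-entropy minus entropy of Bernoulli(`σ(R̃_ij)`) against Bernoulli(`σ(M_ij)`), i.e. their
KL divergence.
-/

open Finset

noncomputable def sigmoid (x : ℝ) : ℝ := 1 / (1 + Real.exp (-x))

noncomputable def klBern (a b : ℝ) : ℝ :=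
  a * Real.log (a / b) + (1 - a) * Real.log ((1 - a) / (1 - b))

open Real (log)

lemma sigmoid_eq_real_sigmoid (x : ℝ) : sigmoid x = Real.sigmoid x := one_div _

lemma Real.sigmoid_log_div {p q : ℝ} (hp : 0 < p) (hq : 0 < q) :
    Real.sigmoid (log (p / q)) = p / (p + q) := by
  rw [Real.sigmoid_def, Real.exp_neg, Real.exp_log (div_pos hp hq)]
  field_simp

/-- Bernoulli KL divergence is cross-entropy minus entropy. -/
lemma klBern_eq_sub {a b : ℝ} (ha₀ : 0 < a) (ha₁ : a < 1) (hb₀ : 0 < b) (hb₁ : b < 1) :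
    klBern a b = (a * log a + (1 - a) * log (1 - a)) - (a * log b + (1 - a) * log (1 - b)) := by
  rw [klBern, Real.log_div ha₀.ne' hb₀.ne', Real.log_div (sub_pos.2 ha₁).ne' (sub_pos.2 hb₁).ne']
  ring

/-- `log (p / q)` minimises the logistic loss with weights `p`, `q`. -/
lemma add_mul_klBern_sigmoid_log_div {p q : ℝ} (hp : 0 < p) (hq : 0 < q) (x : ℝ) :
    (p + q) * klBern (Real.sigmoid (log (p / q))) (Real.sigmoid x) =
      (p * log (Real.sigmoid (log (p / q))) + q * log (Real.sigmoid (-log (p / q))))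
        - (p * log (Real.sigmoid x) + q * log (Real.sigmoid (-x))) := by
  have hpq : 0 < p + q := add_pos hp hq
  have hmass : (p + q) * (p / (p + q)) = p := mul_div_cancel₀ p hpq.ne'
  have hmass' : (p + q) * (1 - p / (p + q)) = q := by field_simp; ring
  rw [Real.sigmoid_neg, Real.sigmoid_neg, Real.sigmoid_log_div hp hq,
    klBern_eq_sub (div_pos hp hpq) ((div_lt_one hpq).2 (by linarith))
      (Real.sigmoid_pos x) (Real.sigmoid_lt_one x)]
  linear_combination
    (log (p / (p + q)) - log (Real.sigmoid x)) * hmass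
      + (log (1 - p / (p + q)) - log (1 - Real.sigmoid x)) * hmass'

/-- The excess SGNS loss of an inner-product matrix `M` over the loss at the
shifted relatedness matrix `R̃` equals the weighted sum of KL divergences
between the Bernoulli co-occurrence distributions induced by `R̃` and by `M`. -/
theorem sgns_excess_loss_eq_weighted_kl
    {I : Type*} [Fintype I]
    (n k : ℝ) (hn : 0 < n) (hk : 0 < k)
    (N : I → ℝ) (Nij : I → I → ℝ)
    (hN : ∀ i, 0 < N i) (hNij : ∀ i j, 0 < Nij i j)
    (ℓ : (I → I → ℝ) → ℝ)
    (hℓ : ∀ M : I → I → ℝ, ℓ M =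
      -∑ i, ∑ j, (Nij i j * Real.log (sigmoid (M i j))
        + (k / n) * N i * N j * Real.log (sigmoid (-(M i j)))))
    (R : I → I → ℝ)
    (hR : ∀ i j, R i j = Real.log (n * Nij i j / (k * N i * N j)))
    (m : I → I → ℝ)
    (hm : ∀ i j, m i j = Nij i j + (k / n) * N i * N j) :
    ∀ M : I → I → ℝ,
      ℓ M - ℓ R = ∑ i, ∑ j, m i j * klBern (sigmoid (R i j)) (sigmoid (M i j)) := by
  intro M
  have hR' : ∀ i j, R i j = log (Nij i j / ((k / n) * N i * N j)) := fun i j => by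
    rw [hR]
    field_simp
  have hcell : ∀ i j, m i j * klBern (sigmoid (R i j)) (sigmoid (M i j)) =
      (Nij i j * log (sigmoid (R i j)) + (k / n) * N i * N j * log (sigmoid (-R i j)))
        - (Nij i j * log (sigmoid (M i j)) + (k / n) * N i * N j * log (sigmoid (-M i j))) :=
    fun i j => by
      simp only [sigmoid_eq_real_sigmoid, hm, hR']
      exact add_mul_klBern_sigmoid_log_div (hNij i j)
        (mul_pos (mul_pos (div_pos hk hn) (hN i)) (hN j)) (M i j)
  simp only [hℓ, hcell, sum_sub_distrib]
  ring
end

section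
/- Let X_1, …, X_n be independent Bernoulli random variables with common mean μ ∈ (0,1), let μ̂ = (1/n)·Σ_{i=1}^n X_i, and fix α > 0. Define the KL upper confidence limit p̃_α = max{ p ∈ [μ̂, 1] : D_KL(μ̂ ‖ p) ≤ α } (the maximum exists since p ↦ D_KL(μ̂‖p) is continuous and increasing on [μ̂, 1)). Then P( μ ≥ p̃_α ) ≤ exp(−n·α); equivalently, p̃_α is a level-(1 − e^{−nα}) lower confidence bound certificate, in the sense that the true mean μ exceeds p̃_α with probability at most exp(−n·α). -/
open MeasureTheory ProbabilityTheory Finset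

/-- Extended-real-valued Bernoulli KL divergence, implementing the convention
`D_KL(a ‖ 1) = +∞` for `a < 1`. -/
noncomputable def klBernE (a b : ℝ) : EReal :=
  if b = 1 ∧ a < 1 then ⊤ else (klBern a b : EReal)

/-!
On the event `p̃ ≤ μ` the empirical mean `μ̂` lies below `μ` with `D_KL(μ̂ ‖ μ) ≥ α`: otherwise
continuity of `D_KL(μ̂ ‖ ·)` at `μ` would put points above `μ` into the set whose maximum is `p̃`.
Since `{x ∈ [0, μ] : D_KL(x ‖ μ) ≥ α}` is compact, it has a largest element `x₀`, so the event is
contained in `{∑ Xᵢ ≤ n x₀}`. The Chernoff bound with the optimal `t ≤ 0`, for which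
`e^{-t x₀} (1 - μ + μ eᵗ) = e^{-D_KL(x₀ ‖ μ)}`, bounds the probability of that event by
`e^{-n D_KL(x₀ ‖ μ)} ≤ e^{-n α}`; at `x₀ = 0` the bound is reached only as `t → -∞`.
-/

open Real

lemma klBern_eq_sub_mul_log (a : ℝ) {b : ℝ} (hb0 : b ≠ 0) (hb1 : b ≠ 1) :
    klBern a b = (a * log a - a * log b) + ((1 - a) * log (1 - a) - (1 - a) * log (1 - b)) := by
  have h1 : a * log (a / b) = a * log a - a * log b := by
    rcases eq_or_ne a 0 with rfl | ha
    · simp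
    · rw [log_div ha hb0]; ring
  have h2 : (1 - a) * log ((1 - a) / (1 - b)) = (1 - a) * log (1 - a) - (1 - a) * log (1 - b) := by
    rcases eq_or_ne a 1 with rfl | ha
    · simp
    · rw [log_div (sub_ne_zero.2 ha.symm) (sub_ne_zero.2 hb1.symm)]; ring
  rw [klBern, h1, h2]

lemma continuous_klBern_left {b : ℝ} (hb0 : b ≠ 0) (hb1 : b ≠ 1) :
    Continuous fun a ↦ klBern a b := by
  simp_rw [klBern_eq_sub_mul_log _ hb0 hb1]
  have : Continuous fun a : ℝ ↦ (1 - a) * log (1 - a) :=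
    continuous_mul_log.comp (continuous_const.sub continuous_id)
  fun_prop

lemma continuousAt_klBern_right (a : ℝ) {b : ℝ} (hb0 : b ≠ 0) (hb1 : b ≠ 1) :
    ContinuousAt (fun x ↦ klBern a x) b := by
  have hev : (fun x ↦ (a * log a - a * log x) + ((1 - a) * log (1 - a) - (1 - a) * log (1 - x)))
      =ᶠ[nhds b] fun x ↦ klBern a x := by
    filter_upwards [eventually_ne_nhds hb0, eventually_ne_nhds hb1] with x hx0 hx1
    exact (klBern_eq_sub_mul_log a hx0 hx1).symm
  refine ContinuousAt.congr ?_ hev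
  have : ContinuousAt (fun x : ℝ ↦ log (1 - x)) b :=
    (continuousAt_log (sub_ne_zero.2 hb1.symm)).comp
      (continuous_const.sub continuous_id).continuousAt
  have := continuousAt_log hb0
  fun_prop

lemma klBern_zero_left (b : ℝ) : klBern 0 b = -log (1 - b) := by
  simp [klBern, log_inv]

/-- `klBern x p` is the Legendre transform `sup_t (t x - log (1 - p + p eᵗ))` of the Bernoulli
cumulant generating function; the supremum is attained at `t = log (x (1 - p) / (p (1 - x)))`. -/
lemma exists_exp_neg_mul_mul_eq_exp_neg_klBern {x p : ℝ} (hx : 0 < x) (hxp : x ≤ p)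
    (hp1 : p < 1) : ∃ t ≤ 0, exp (-t * x) * (1 - p + p * exp t) = exp (-klBern x p) := by
  have hp : 0 < p := hx.trans_le hxp
  have h1x : 0 < 1 - x := by linarith
  have h1p : 0 < 1 - p := by linarith
  refine ⟨log (x / p) + log ((1 - p) / (1 - x)), ?_, ?_⟩
  · rw [← log_mul (by positivity) (by positivity)]
    refine log_nonpos (by positivity) ?_
    rw [div_mul_div_comm, div_le_one (by positivity)]
    nlinarith
  · set L := log ((1 - p) / (1 - x))
    have hbase : 1 - p + p * exp (log (x / p) + L) = exp L := by
      rw [exp_add, exp_log (by positivity), exp_log (by positivity)]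
      field_simp
      ring
    have hlog : log ((1 - x) / (1 - p)) = -L := by
      rw [← log_inv, inv_div]
    rw [hbase, ← exp_add, klBern, hlog]
    congr 1
    ring

section Bernoulli

variable {Ω : Type*} [MeasurableSpace Ω] {P : Measure Ω} [IsProbabilityMeasure P]

lemma mgf_of_zero_or_one {Y : Ω → ℝ} (hY : Measurable Y) (h01 : ∀ ω, Y ω = 0 ∨ Y ω = 1)
    (t : ℝ) : mgf Y P t = 1 - P[Y] + P[Y] * exp t := by
  have hexp : (fun ω ↦ exp (t * Y ω)) = fun ω ↦ 1 + (exp t - 1) * Y ω := by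
    funext ω
    rcases h01 ω with h | h <;> simp [h]
  have hint : Integrable Y P := by
    refine .of_mem_Icc 0 1 hY.aemeasurable (ae_of_all _ fun ω ↦ ?_)
    rcases h01 ω with h | h <;> simp [h]
  rw [mgf, hexp, integral_add (integrable_const 1) (hint.const_mul _), integral_const,
    integral_const_mul]
  simp only [probReal_univ, smul_eq_mul, one_mul]
  ring

variable {ι : Type*} [Fintype ι] {X : ι → Ω → ℝ} {p : ℝ}

lemma measureReal_sum_le_le_exp_mul_pow (hmeas : ∀ i, Measurable (X i)) (hindep : iIndepFun X P)
    (h01 : ∀ i ω, X i ω = 0 ∨ X i ω = 1) (hmean : ∀ i, P[X i] = p) {t : ℝ} (ht : t ≤ 0)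
    (c : ℝ) :
    P.real {ω | ∑ i, X i ω ≤ c} ≤ exp (-t * c) * (1 - p + p * exp t) ^ Fintype.card ι := by
  have hint : Integrable (fun ω ↦ exp (t * (∑ i, X i) ω)) P :=
    hindep.integrable_exp_mul_sum hmeas fun i _ ↦ integrable_exp_mul_of_mem_Icc (a := 0) (b := 1)
      (hmeas i).aemeasurable (ae_of_all _ fun ω ↦ by rcases h01 i ω with h | h <;> simp [h])
  have hmgf : mgf (∑ i, X i) P t = (1 - p + p * exp t) ^ Fintype.card ι := by
    simp [hindep.mgf_sum hmeas, mgf_of_zero_or_one (hmeas _) (h01 _), hmean]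
  simpa [hmgf] using measure_le_le_exp_mul_mgf c ht hint

theorem measureReal_sum_le_le_exp_neg_klBern (hmeas : ∀ i, Measurable (X i))
    (hindep : iIndepFun X P) (h01 : ∀ i ω, X i ω = 0 ∨ X i ω = 1) (hmean : ∀ i, P[X i] = p)
    {x : ℝ} (hx : 0 ≤ x) (hxp : x ≤ p) (hp1 : p < 1) :
    P.real {ω | ∑ i, X i ω ≤ Fintype.card ι * x} ≤ exp (-Fintype.card ι * klBern x p) := by
  set n := Fintype.card ι
  have hchernoff : ∀ t ≤ 0, ∀ c,
      P.real {ω | ∑ i, X i ω ≤ c} ≤ exp (-t * c) * (1 - p + p * exp t) ^ n :=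
    fun _ ht ↦ measureReal_sum_le_le_exp_mul_pow hmeas hindep h01 hmean ht
  rcases hx.eq_or_lt with rfl | hx
  · have hlim : Filter.Tendsto (fun t ↦ (1 - p + p * exp t) ^ n) Filter.atBot
        (nhds ((1 - p) ^ n)) := by
      simpa using ((tendsto_exp_atBot.const_mul p).const_add (1 - p)).pow n
    have hbound : P.real {ω | ∑ i, X i ω ≤ n * 0} ≤ (1 - p) ^ n :=
      ge_of_tendsto hlim <| Filter.eventually_le_atBot 0 |>.mono fun t ht ↦ by
        simpa using hchernoff t ht (n * 0)
    rwa [klBern_zero_left, mul_neg, neg_mul, neg_neg, exp_nat_mul, exp_log (by linarith)]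
  · obtain ⟨t, ht, hkl⟩ := exists_exp_neg_mul_mul_eq_exp_neg_klBern hx hxp hp1
    calc P.real {ω | ∑ i, X i ω ≤ n * x}
        ≤ exp (-t * (n * x)) * (1 - p + p * exp t) ^ n := hchernoff t ht _
      _ = (exp (-t * x) * (1 - p + p * exp t)) ^ n := by
          rw [mul_pow, ← exp_nat_mul]; ring_nf
      _ = exp (-n * klBern x p) := by rw [hkl, ← exp_nat_mul]; ring_nf

end Bernoulli

lemma le_klBern_of_isGreatest_le {a α q p : ℝ}
    (hq : IsGreatest {r | r ∈ Set.Icc a 1 ∧ klBernE a r ≤ (α : EReal)} q) (hqp : q ≤ p)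
    (hp0 : 0 < p) (hp1 : p < 1) : a ≤ p ∧ α ≤ klBern a p := by
  obtain ⟨⟨⟨haq, -⟩, -⟩, hmax⟩ := hq
  refine ⟨haq.trans hqp, le_of_not_gt fun hlt ↦ ?_⟩
  have hnear : ∀ᶠ r in nhdsWithin p (Set.Ioi p), klBern a r < α ∧ r ∈ Set.Ioo p 1 :=
    (((continuousAt_klBern_right a hp0.ne' hp1.ne).eventually_lt continuousAt_const hlt).filter_mono
      nhdsWithin_le_nhds).and (Ioo_mem_nhdsGT hp1)
  obtain ⟨r, hrα, hpr, hr1⟩ := hnear.exists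
  have hr : r ∈ {r | r ∈ Set.Icc a 1 ∧ klBernE a r ≤ (α : EReal)} := by
    refine ⟨⟨(haq.trans hqp).trans hpr.le, hr1.le⟩, ?_⟩
    rw [klBernE, if_neg fun h ↦ hr1.ne h.1]
    exact_mod_cast hrα.le
  linarith [hmax hr]

theorem kl_ucb_lower_confidence_bound_general
    {Ω : Type*} [MeasurableSpace Ω] (P : Measure Ω) [IsProbabilityMeasure P]
    (n : ℕ) (μ : ℝ) (hμ : μ ∈ Set.Ioo (0 : ℝ) 1)
    (X : Fin n → Ω → ℝ)
    (hmeas : ∀ i, Measurable (X i))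
    (hindep : iIndepFun X P)
    (h01 : ∀ i ω, X i ω = 0 ∨ X i ω = 1)
    (hmean : ∀ i, ∫ ω, X i ω ∂P = μ)
    (muhat : Ω → ℝ) (hmuhat : ∀ ω, muhat ω = (1 / n : ℝ) * ∑ i, X i ω)
    (α : ℝ)
    (ptilde : Ω → ℝ)
    (hptilde : ∀ ω, IsGreatest
      {p : ℝ | p ∈ Set.Icc (muhat ω) 1 ∧ klBernE (muhat ω) p ≤ (α : EReal)}
      (ptilde ω)) :
    P {ω | ptilde ω ≤ μ} ≤ ENNReal.ofReal (Real.exp (-(n : ℝ) * α)) := by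
  obtain ⟨hμ0, hμ1⟩ := hμ
  have hsum : ∀ ω, ∑ i, X i ω = n * muhat ω := fun ω ↦ by
    rcases n.eq_zero_or_pos with rfl | hn
    · simp
    · rw [hmuhat, ← mul_assoc, mul_one_div_cancel (by positivity), one_mul]
  have hmuhat_nonneg : ∀ ω, 0 ≤ muhat ω := fun ω ↦ by
    rw [hmuhat]
    exact mul_nonneg (by positivity)
      (sum_nonneg fun i _ ↦ by rcases h01 i ω with h | h <;> simp [h])
  set S := {x | x ∈ Set.Icc 0 μ ∧ α ≤ klBern x μ}
  have hmem : ∀ ω, ptilde ω ≤ μ → muhat ω ∈ S := fun ω hω ↦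
    have h := le_klBern_of_isGreatest_le (hptilde ω) hω hμ0 hμ1
    ⟨⟨hmuhat_nonneg ω, h.1⟩, h.2⟩
  rcases S.eq_empty_or_nonempty with hS | hS
  · have : {ω | ptilde ω ≤ μ} = ∅ :=
      Set.eq_empty_of_forall_notMem fun ω hω ↦ by simpa [hS] using hmem ω hω
    simp [this]
  obtain ⟨x₀, ⟨⟨hx₀, hx₀μ⟩, hx₀α⟩, hx₀max⟩ :=
    (isCompact_Icc.inter_right (isClosed_le continuous_const
      (continuous_klBern_left hμ0.ne' hμ1.ne))).exists_isGreatest hS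
  have hsub : {ω | ptilde ω ≤ μ} ⊆ {ω | ∑ i, X i ω ≤ n * x₀} := fun ω hω ↦ by
    show ∑ i, X i ω ≤ n * x₀
    rw [hsum]
    exact mul_le_mul_of_nonneg_left (hx₀max (hmem ω hω)) n.cast_nonneg
  calc P {ω | ptilde ω ≤ μ} ≤ ENNReal.ofReal (P.real {ω | ∑ i, X i ω ≤ n * x₀}) := by
        rw [ofReal_measureReal]; exact measure_mono hsub
    _ ≤ ENNReal.ofReal (exp (-n * klBern x₀ μ)) := by
        gcongr
        simpa using measureReal_sum_le_le_exp_neg_klBern hmeas hindep h01 hmean hx₀ hx₀μ hμ1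
    _ ≤ ENNReal.ofReal (exp (-n * α)) := by
        exact ENNReal.ofReal_le_ofReal <| exp_le_exp.2 <|
          mul_le_mul_of_nonpos_left hx₀α (neg_nonpos.2 n.cast_nonneg)

/-- KL upper confidence limit: with `μ̂` the empirical mean of `n` independent
Bernoulli variables with mean `μ ∈ (0,1)` and
`p̃_α = max {p ∈ [μ̂, 1] : D_KL(μ̂ ‖ p) ≤ α}`, the true mean exceeds `p̃_α`
with probability at most `exp(−n·α)`. -/
theorem kl_ucb_lower_confidence_bound
    {Ω : Type*} [MeasurableSpace Ω] (P : Measure Ω) [IsProbabilityMeasure P]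
    (n : ℕ) (hn : 0 < n) (μ : ℝ) (hμ : μ ∈ Set.Ioo (0 : ℝ) 1)
    (X : Fin n → Ω → ℝ)
    (hmeas : ∀ i, Measurable (X i))
    (hindep : iIndepFun X P)
    (h01 : ∀ i ω, X i ω = 0 ∨ X i ω = 1)
    (hmean : ∀ i, ∫ ω, X i ω ∂P = μ)
    (muhat : Ω → ℝ) (hmuhat : ∀ ω, muhat ω = (1 / n : ℝ) * ∑ i, X i ω)
    (α : ℝ) (hα : 0 < α)
    (ptilde : Ω → ℝ)
    (hptilde : ∀ ω, IsGreatest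
      {p : ℝ | p ∈ Set.Icc (muhat ω) 1 ∧ klBernE (muhat ω) p ≤ (α : EReal)}
      (ptilde ω)) :
    P {ω | ptilde ω ≤ μ} ≤ ENNReal.ofReal (Real.exp (-(n : ℝ) * α)) :=
  kl_ucb_lower_confidence_bound_general P n μ hμ X hmeas hindep h01 hmean muhat hmuhat α ptilde
    hptilde
end

section
/- Let I and E be finite sets and let p : I × E → (0, ∞) be a strictly positive joint probability mass function, with marginals p_I(i) = Σ_e p(i,e) and p_E(e) = Σ_i p(i,e), conditionals p(e|i) = p(i,e)/p_I(i), and relatedness measure R(i,e) = log( p(i,e) / (p_I(i)·p_E(e)) ). Let q be any probability mass function on E (for instance the conditional co-occurrence distribution of a product set {i_1,…,i_k}). Then for any i* ∈ I the following are equivalent: (a) for every j ∈ I, Σ_{e∈E} q(e)·( R(i*,e) − R(j,e) ) ≥ 0; (b) i* ∈ argmin_{i∈I} D( q ‖ p(·|i) ). That is, the higher-order representation defined by expected-relatedness dominance is exactly the product whose conditional co-occurrence distribution is KL-closest to q. -/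
open Finset

/-- KL divergence between probability mass functions on a finite set, with the
convention `0·log 0 = 0` (automatic in Lean since `Real.log 0 = 0`). -/
noncomputable def klDiv {E : Type*} [Fintype E] (q r : E → ℝ) : ℝ :=
  ∑ e, q e * Real.log (q e / r e)

/-- Duality between expected-relatedness dominance and KL-closeness: in the
setting of a strictly positive joint pmf `p` with conditionals `p(·|i)` and
pointwise mutual information `R`, a product `i*` satisfies
`Σ_e q(e)·(R(i*,e) − R(j,e)) ≥ 0` for every `j` if and only if `i*` minimizes
`D(q ‖ p(·|i))` over `i ∈ I`. -/
theorem higher_order_representation_iff_kl_argmin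
    {I E : Type*} [Fintype I] [Fintype E]
    (p : I → E → ℝ) (hp : ∀ i e, 0 < p i e)
    (hsum : ∑ i, ∑ e, p i e = 1)
    (pI : I → ℝ) (hpI : ∀ i, pI i = ∑ e, p i e)
    (pE : E → ℝ) (hpE : ∀ e, pE e = ∑ i, p i e)
    (cond : I → E → ℝ) (hcond : ∀ i e, cond i e = p i e / pI i)
    (R : I → E → ℝ) (hR : ∀ i e, R i e = Real.log (p i e / (pI i * pE e)))
    (q : E → ℝ) (hq0 : ∀ e, 0 ≤ q e) (hq1 : ∑ e, q e = 1)
    (istar : I) :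
    (∀ j : I, 0 ≤ ∑ e, q e * (R istar e - R j e)) ↔
      (∀ i : I, klDiv q (cond istar) ≤ klDiv q (cond i)) := by
  have hEne : Nonempty E := by
    by_contra h
    rw [not_nonempty_iff] at h
    simp [Finset.univ_eq_empty] at hq1
  have hpIpos : ∀ i, 0 < pI i := fun i => by
    rw [hpI]; exact Finset.sum_pos (fun e _ => hp i e) Finset.univ_nonempty
  have hIne : Nonempty I := by
    by_contra h
    rw [not_nonempty_iff] at h
    simp [Finset.univ_eq_empty] at hsum
  have hpEpos : ∀ e, 0 < pE e := fun e => by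
    rw [hpE]; exact Finset.sum_pos (fun i _ => hp i e) Finset.univ_nonempty
  have hcpos : ∀ i e, 0 < cond i e := fun i e => by
    rw [hcond]; exact div_pos (hp i e) (hpIpos i)
  have hRlog : ∀ i e, R i e = Real.log (cond i e) - Real.log (pE e) := by
    intro i e
    rw [hR, hcond, ← div_div,
      Real.log_div (div_pos (hp i e) (hpIpos i)).ne' (hpEpos e).ne']
  have key : ∀ i j : I, ∑ e, q e * (R i e - R j e)
      = klDiv q (cond j) - klDiv q (cond i) := by
    intro i j
    unfold klDiv
    rw [← Finset.sum_sub_distrib]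
    refine Finset.sum_congr rfl fun e _ => ?_
    rcases eq_or_lt_of_le (hq0 e) with h0 | h0
    · simp [← h0]
    · rw [Real.log_div h0.ne' (hcpos j e).ne', Real.log_div h0.ne' (hcpos i e).ne',
        hRlog i e, hRlog j e]
      ring
  constructor
  · intro h i
    have := h i
    rw [key] at this
    linarith
  · intro h j
    have := h j
    rw [key]
    linarith
end

section
/- Let (Ω, 𝔽, P) be a probability space, n ≥ 1, and let: θ be a random vector in ℝ^p with square-integrable entries, mean zero, and covariance Σ = E[θθᵀ]; ε be a random vector in ℝ^n with E[‖ε‖₂] ≤ σ·√n for some σ ≥ 0; U_X be an n × p real matrix with orthonormal columns (U_Xᵀ U_X = I_p); Z be an n × d real matrix and U_Z an n × r matrix whose columns form an orthonormal basis of the column space of Z; X be an arbitrary n × q real matrix; and φ : ℝ × ℝ → ℝ be L-Lipschitz in each argument and satisfy φ(b, b) ≤ φ(a, b) for all a, b ∈ ℝ. Set y₀ = U_X θ and y = y₀ + ε, and write L_n(v, w) = (1/n)·Σ_{i=1}^n φ(v_i, w_i). Let θ̂_Z: Ω → ℝ^d be a measurable selection with θ̂_Z(ω) ∈ argmin_{θ'∈ℝ^d}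 L_n(Zθ', y(ω)) and θ̂_X: Ω → ℝ^q a measurable selection with θ̂_X(ω) ∈ argmin_{θ'∈ℝ^q} L_n(Xθ', y(ω)), assuming these minimizers exist and all expectations below are finite. Define the average-case risks 𝓛(Z) = E[ L_n(Z θ̂_Z, y₀) ] and 𝓛(X) = E[ L_n(X θ̂_X, y₀) ]. Then 𝓛(Z) − 𝓛(X) ≤ L·√( ( tr(Σ) − λ_min(Σ)·‖U_Xᵀ U_Z‖_F² ) / n ) + 2·L·σ. -/
/-!
Write `P_Z = U_Z U_Zᵀ` for the orthogonal projection onto the column space of `Z`, and fix `ω`.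
Compare `θ̂_Z` with the competitor `θ'` for which `Zθ' = P_Z y₀`. Swapping the noisy labels `y`
for `y₀` twice costs `2L‖ε‖₁/n`, and replacing `Zθ'` by `y₀` costs `L‖(1 - P_Z) y₀‖₁/n`. Since
`φ(b, b) ≤ φ(a, b)`, `y₀` fits itself better than any predictor does, `Xθ̂_X` included.
Cauchy–Schwarz gives `‖·‖₁ ≤ √n ‖·‖₂`. In expectation, Jensen gives
`E‖(1 - P_Z) U_X θ‖₂ ≤ √(E‖(1 - P_Z) U_X θ‖₂²) = √(tr Σ - tr(Bᵀ Σ B))` with `B = U_Xᵀ U_Z`,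
and `tr(Bᵀ Σ B) ≥ λ_min(Σ) ‖B‖_F²` by the Rayleigh bound applied to each column of `B`.
-/

open MeasureTheory Finset Matrix

theorem sum_abs_le_sqrt_card_mul_sqrt_sum_sq {ι : Type*} [Fintype ι] (x : ι → ℝ) :
    ∑ i, |x i| ≤ √(Fintype.card ι) * √(∑ i, x i ^ 2) := by
  simpa using Real.sum_mul_le_sqrt_mul_sqrt univ (fun _ => 1) (fun i => |x i|)

theorem sum_sub_sum_le_mul_sum_abs_sub {ι : Type*} [Fintype ι] {f : ι → ℝ → ℝ} {L : ℝ}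
    (hf : ∀ i a b, |f i a - f i b| ≤ L * |a - b|) (a b : ι → ℝ) :
    ∑ i, f i (a i) - ∑ i, f i (b i) ≤ L * ∑ i, |a i - b i| := by
  rw [← sum_sub_distrib, mul_sum]
  exact sum_le_sum fun i _ => (le_abs_self _).trans (hf i _ _)

-- The chain `u` on `y₀` → `u` on `y` → `v` on `y` → `v` on `y₀` → `y₀` on `y₀` → `w` on `y₀`.
theorem sum_loss_sub_le_of_noisy_loss_le {ι : Type*} [Fintype ι] {φ : ℝ → ℝ → ℝ} {L : ℝ}
    (hφ₁ : ∀ a b y : ℝ, |φ a y - φ b y| ≤ L * |a - b|)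
    (hφ₂ : ∀ x a b : ℝ, |φ x a - φ x b| ≤ L * |a - b|)
    (hφmin : ∀ a b : ℝ, φ b b ≤ φ a b)
    {u v y : ι → ℝ} (huv : ∑ i, φ (u i) (y i) ≤ ∑ i, φ (v i) (y i)) (y₀ w : ι → ℝ) :
    ∑ i, φ (u i) (y₀ i) - ∑ i, φ (w i) (y₀ i)
      ≤ L * ∑ i, |v i - y₀ i| + 2 * (L * ∑ i, |y i - y₀ i|) := by
  have hu := sum_sub_sum_le_mul_sum_abs_sub (fun i => hφ₂ (u i)) y₀ y
  have hv := sum_sub_sum_le_mul_sum_abs_sub (fun i => hφ₂ (v i)) y y₀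
  have hvy₀ := sum_sub_sum_le_mul_sum_abs_sub (fun i a b => hφ₁ a b (y₀ i)) v y₀
  have hw : ∑ i, φ (y₀ i) (y₀ i) ≤ ∑ i, φ (w i) (y₀ i) := sum_le_sum fun i _ => hφmin _ _
  simp only [abs_sub_comm (y₀ _)] at hu
  linarith

theorem exists_mulVec_eq_mulVec_of_span_le {R m k l : Type*} [CommSemiring R] [Fintype k]
    [Fintype l] {A : Matrix m k R} {B : Matrix m l R}
    (h : Submodule.span R (Set.range Aᵀ) ≤ Submodule.span R (Set.range Bᵀ)) (x : k → R) :
    ∃ x', B *ᵥ x' = A *ᵥ x := by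
  have hx : A *ᵥ x ∈ LinearMap.range B.mulVecLin := by
    rw [range_mulVecLin]
    exact h (show A *ᵥ x ∈ Submodule.span R (Set.range A.col) by
      rw [← range_mulVecLin]; exact ⟨x, rfl⟩)
  exact hx

theorem mean_loss_sub_le_of_isMinimizer {ι d l : Type*} [Fintype ι] [DecidableEq ι] [Fintype d]
    [Fintype l] {φ : ℝ → ℝ → ℝ} {L : ℝ} (hL : 0 ≤ L)
    (hφ₁ : ∀ a b y : ℝ, |φ a y - φ b y| ≤ L * |a - b|)
    (hφ₂ : ∀ x a b : ℝ, |φ x a - φ x b| ≤ L * |a - b|)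
    (hφmin : ∀ a b : ℝ, φ b b ≤ φ a b) {Z : Matrix ι d ℝ} {V : Matrix ι l ℝ}
    (hspan : Submodule.span ℝ (Set.range Vᵀ) ≤ Submodule.span ℝ (Set.range Zᵀ))
    {y : ι → ℝ} {θhat : d → ℝ}
    (hθhat : ∀ θ', ∑ i, φ ((Z *ᵥ θhat) i) (y i) ≤ ∑ i, φ ((Z *ᵥ θ') i) (y i)) (y₀ w : ι → ℝ) :
    (∑ i, φ ((Z *ᵥ θhat) i) (y₀ i) - ∑ i, φ (w i) (y₀ i)) / Fintype.card ι
      ≤ L / √(Fintype.card ι)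
        * (√(∑ i, ((1 - V * Vᵀ) *ᵥ y₀) i ^ 2) + 2 * √(∑ i, (y i - y₀ i) ^ 2)) := by
  set N : ℝ := (Fintype.card ι : ℝ)
  obtain ⟨θ', hθ'⟩ := exists_mulVec_eq_mulVec_of_span_le hspan (Vᵀ *ᵥ y₀)
  have hres : ∀ i, |(Z *ᵥ θ') i - y₀ i| = |((1 - V * Vᵀ) *ᵥ y₀) i| := fun i => by
    rw [hθ', mulVec_mulVec, sub_mulVec, one_mulVec, Pi.sub_apply, abs_sub_comm]
  have hbound := sum_loss_sub_le_of_noisy_loss_le hφ₁ hφ₂ hφmin (hθhat θ') y₀ w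
  have hproj := sum_abs_le_sqrt_card_mul_sqrt_sum_sq ((1 - V * Vᵀ) *ᵥ y₀)
  have hnoise := sum_abs_le_sqrt_card_mul_sqrt_sum_sq (y - y₀)
  simp only [hres, Pi.sub_apply] at hbound hnoise
  calc (∑ i, φ ((Z *ᵥ θhat) i) (y₀ i) - ∑ i, φ (w i) (y₀ i)) / N
      ≤ (L * (√N * √(∑ i, ((1 - V * Vᵀ) *ᵥ y₀) i ^ 2))
          + 2 * (L * (√N * √(∑ i, (y i - y₀ i) ^ 2)))) / N := by
        gcongr
        exact hbound.trans (by gcongr)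
    _ = L / √N * (√(∑ i, ((1 - V * Vᵀ) *ᵥ y₀) i ^ 2) + 2 * √(∑ i, (y i - y₀ i) ^ 2)) := by
        rw [div_eq_mul_one_div L, ← Real.sqrt_div_self']
        ring

theorem transpose_mul_self_one_sub_mul_transpose_mul {R m k l : Type*} [CommRing R] [Fintype m]
    [Fintype k] [Fintype l] [DecidableEq m] [DecidableEq k] [DecidableEq l]
    {U : Matrix m k R} {V : Matrix m l R}
    (hU : Uᵀ * U = 1) (hV : Vᵀ * V = 1) :
    ((1 - V * Vᵀ) * U)ᵀ * ((1 - V * Vᵀ) * U) = 1 - (Uᵀ * V) * (Uᵀ * V)ᵀ := by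
  have hidem : V * Vᵀ * (V * Vᵀ) = V * Vᵀ := by
    rw [Matrix.mul_assoc, ← Matrix.mul_assoc Vᵀ, hV, Matrix.one_mul]
  have hproj : (1 - V * Vᵀ)ᵀ * (1 - V * Vᵀ) = 1 - V * Vᵀ := by
    rw [transpose_sub, transpose_one, transpose_mul, transpose_transpose, sub_mul, mul_sub,
      mul_sub, hidem]
    simp
  rw [transpose_mul, Matrix.mul_assoc, ← Matrix.mul_assoc _ (1 - V * Vᵀ), hproj, Matrix.sub_mul,
    Matrix.one_mul, Matrix.mul_sub, hU, transpose_mul, transpose_transpose]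
  simp only [Matrix.mul_assoc]

section Moments

variable {Ω ι : Type*} [MeasurableSpace Ω] {P : Measure Ω}

theorem integral_le_sqrt_integral_sq [IsProbabilityMeasure P] {f : Ω → ℝ} (hf : MemLp f 2 P) :
    ∫ ω, f ω ∂P ≤ √(∫ ω, f ω ^ 2 ∂P) := by
  have hvar := ProbabilityTheory.variance_nonneg f P
  rw [ProbabilityTheory.variance_eq_sub hf, sub_nonneg] at hvar
  exact (le_abs_self _).trans (Real.abs_le_sqrt hvar)

variable [Fintype ι]

theorem memLp_sqrt_sum_sq {f : Ω → ι → ℝ} (hf : ∀ i, MemLp (fun ω => f ω i) 2 P) :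
    MemLp (fun ω => √(∑ i, f ω i ^ 2)) 2 P := by
  have hsum : Integrable (fun ω => ∑ i, f ω i ^ 2) P :=
    integrable_finsetSum _ fun i _ => (hf i).integrable_sq
  refine (memLp_two_iff_integrable_sq
    (Real.continuous_sqrt.comp_aestronglyMeasurable hsum.1)).mpr ?_
  refine hsum.congr (Filter.Eventually.of_forall fun ω => ?_)
  exact (Real.sq_sqrt (by positivity)).symm

theorem integral_sqrt_sum_sq_le [IsProbabilityMeasure P] {f : Ω → ι → ℝ}
    (hf : ∀ i, MemLp (fun ω => f ω i) 2 P) :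
    ∫ ω, √(∑ i, f ω i ^ 2) ∂P ≤ √(∑ i, ∫ ω, f ω i ^ 2 ∂P) := by
  refine (integral_le_sqrt_integral_sq (memLp_sqrt_sum_sq hf)).trans_eq ?_
  simp_rw [Real.sq_sqrt (sum_nonneg fun i _ => sq_nonneg (f _ i))]
  rw [integral_finsetSum _ fun i _ => (hf i).integrable_sq]

theorem memLp_mulVec_apply {m : Type*} {θ : Ω → ι → ℝ} (hθ : ∀ i, MemLp (fun ω => θ ω i) 2 P)
    (M : Matrix m ι ℝ) (i : m) : MemLp (fun ω => (M *ᵥ θ ω) i) 2 P := by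
  simpa [mulVec, dotProduct] using
    memLp_finsetSum univ fun j _ => (hθ j).const_mul (M i j)

theorem integral_mulVec_apply_sq {m : Type*} {θ : Ω → ι → ℝ}
    (hθ : ∀ i, MemLp (fun ω => θ ω i) 2 P) {S : Matrix ι ι ℝ}
    (hS : ∀ i j, S i j = ∫ ω, θ ω i * θ ω j ∂P) (M : Matrix m ι ℝ) (i : m) :
    ∫ ω, (M *ᵥ θ ω) i ^ 2 ∂P = (M * S * Mᵀ) i i := by
  have hint : ∀ j k, Integrable (fun ω => M i j * M i k * (θ ω j * θ ω k)) P := fun j k =>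
    ((hθ j).integrable_mul (hθ k)).const_mul _
  have hexp : ∀ ω, (M *ᵥ θ ω) i ^ 2 = ∑ j, ∑ k, M i j * M i k * (θ ω j * θ ω k) := by
    intro ω
    simp only [mulVec, dotProduct, sq, sum_mul_sum]
    exact sum_congr rfl fun j _ => sum_congr rfl fun k _ => by ring
  simp_rw [hexp]
  rw [integral_finsetSum _ fun j _ => integrable_finsetSum _ fun k _ => hint j k]
  simp_rw [integral_finsetSum _ fun k _ => hint _ k, integral_const_mul, ← hS]
  simp only [mul_apply, transpose_apply, sum_mul]
  rw [sum_comm]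
  exact sum_congr rfl fun j _ => sum_congr rfl fun k _ => by ring

end Moments

section Spectral

variable {ι : Type*} [Fintype ι] [DecidableEq ι] {S : Matrix ι ι ℝ}

theorem Matrix.IsHermitian.iInf_eigenvalues_mul_dotProduct_self_le (hS : S.IsHermitian)
    (x : ι → ℝ) :
    (⨅ i, hS.eigenvalues i) * (x ⬝ᵥ x) ≤ x ⬝ᵥ S *ᵥ x := by
  set U : Matrix ι ι ℝ := (hS.eigenvectorUnitary : Matrix ι ι ℝ)
  set z : ι → ℝ := Uᵀ *ᵥ x
  have hxU : x ᵥ* U = z := (mulVec_transpose U x).symm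
  have hquad : x ⬝ᵥ S *ᵥ x = ∑ i, hS.eigenvalues i * z i ^ 2 := by
    conv_lhs => rw [hS.spectral_theorem, Unitary.conjStarAlgAut_apply]
    rw [← mulVec_mulVec, ← mulVec_mulVec, dotProduct_mulVec x U, hxU]
    simp only [dotProduct, RCLike.ofReal_real_eq_id, CompTriple.comp_eq, star_eq_conjTranspose,
      conjTranspose_eq_transpose_of_trivial, mulVec_diagonal, mul_left_comm, sq, z]
    rfl
  have hnorm : x ⬝ᵥ x = ∑ i, z i ^ 2 := by
    have hUU : U * Uᵀ = 1 := by
      simpa [U, star_eq_conjTranspose] using mem_unitaryGroup_iff.mp hS.eigenvectorUnitary.2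
    calc x ⬝ᵥ x = x ⬝ᵥ (U * Uᵀ) *ᵥ x := by rw [hUU, one_mulVec]
      _ = z ⬝ᵥ z := by rw [← mulVec_mulVec, dotProduct_mulVec, hxU]
      _ = _ := by simp [dotProduct, sq]
  rw [hquad, hnorm, mul_sum]
  exact sum_le_sum fun i _ =>
    mul_le_mul_of_nonneg_right (ciInf_le (Finite.bddBelow_range _) i) (sq_nonneg _)

theorem Matrix.IsHermitian.iInf_eigenvalues_mul_sum_sq_le_trace {k : Type*} [Fintype k]
    (hS : S.IsHermitian) (B : Matrix ι k ℝ) :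
    (⨅ i, hS.eigenvalues i) * ∑ i, ∑ j, B i j ^ 2 ≤ (Bᵀ * S * B).trace := by
  have hcol : ∀ j, (Bᵀ * S * B) j j = Bᵀ j ⬝ᵥ S *ᵥ Bᵀ j := by
    intro j
    simp only [mul_apply, transpose_apply, sum_mul, mul_assoc, dotProduct, mulVec, mul_sum]
    exact sum_comm
  rw [sum_comm, mul_sum, trace]
  refine sum_le_sum fun j _ => ?_
  simpa [hcol, dotProduct, sq] using hS.iInf_eigenvalues_mul_dotProduct_self_le (Bᵀ j)

end Spectral

-- `1 - V Vᵀ` is the orthogonal projection onto the complement of the column space of `V`.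
theorem integral_sqrt_sum_sq_orthProj_mulVec_le {Ω m k l : Type*} [MeasurableSpace Ω]
    {P : Measure Ω} [IsProbabilityMeasure P] [Fintype m] [DecidableEq m] [Fintype k]
    [DecidableEq k] [Fintype l] [DecidableEq l] {θ : Ω → k → ℝ}
    (hθ : ∀ i, MemLp (fun ω => θ ω i) 2 P) {S : Matrix k k ℝ}
    (hS : ∀ i j, S i j = ∫ ω, θ ω i * θ ω j ∂P) (hSh : S.IsHermitian)
    {U : Matrix m k ℝ} {V : Matrix m l ℝ} (hU : Uᵀ * U = 1) (hV : Vᵀ * V = 1) :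
    ∫ ω, √(∑ i, (((1 - V * Vᵀ) * U) *ᵥ θ ω) i ^ 2) ∂P
      ≤ √(S.trace - (⨅ i, hSh.eigenvalues i) * ∑ i, ∑ j, (Uᵀ * V) i j ^ 2) := by
  refine (integral_sqrt_sum_sq_le (memLp_mulVec_apply hθ _)).trans (Real.sqrt_le_sqrt ?_)
  simp_rw [integral_mulVec_apply_sq hθ hS]
  change trace _ ≤ _
  rw [trace_mul_cycle, transpose_mul_self_one_sub_mul_transpose_mul hU hV, sub_mul, trace_sub,
    Matrix.one_mul, Matrix.mul_assoc, trace_mul_comm]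
  linarith [hSh.iInf_eigenvalues_mul_sum_sq_le_trace (Uᵀ * V)]

theorem embedding_generalization_bound_general
    {Ω : Type*} [MeasurableSpace Ω] (P : Measure Ω) [IsProbabilityMeasure P]
    {n p d r q : ℕ} (hn : 0 < n)
    (L σ : ℝ) (hL : 0 ≤ L)
    (θ : Ω → Fin p → ℝ)
    (hθL2 : ∀ i, MemLp (fun ω => θ ω i) 2 P)
    (S : Matrix (Fin p) (Fin p) ℝ)
    (hS : ∀ i j, S i j = ∫ ω, θ ω i * θ ω j ∂P)
    (hpsd : S.PosSemidef)
    (ε : Ω → Fin n → ℝ)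
    (hεint : Integrable (fun ω => Real.sqrt (∑ i, (ε ω i) ^ 2)) P)
    (hεbound : ∫ ω, Real.sqrt (∑ i, (ε ω i) ^ 2) ∂P ≤ σ * Real.sqrt n)
    (UX : Matrix (Fin n) (Fin p) ℝ) (hUX : UXᵀ * UX = 1)
    (Z : Matrix (Fin n) (Fin d) ℝ)
    (UZ : Matrix (Fin n) (Fin r) ℝ) (hUZorth : UZᵀ * UZ = 1)
    (hUZspan : Submodule.span ℝ (Set.range UZᵀ) = Submodule.span ℝ (Set.range Zᵀ))
    (X : Matrix (Fin n) (Fin q) ℝ)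
    (φ : ℝ → ℝ → ℝ)
    (hφ1 : ∀ a b y : ℝ, |φ a y - φ b y| ≤ L * |a - b|)
    (hφ2 : ∀ x a b : ℝ, |φ x a - φ x b| ≤ L * |a - b|)
    (hφmin : ∀ a b : ℝ, φ b b ≤ φ a b)
    (y0 : Ω → Fin n → ℝ) (hy0 : ∀ ω, y0 ω = UX.mulVec (θ ω))
    (y : Ω → Fin n → ℝ) (hy : ∀ ω, y ω = y0 ω + ε ω)
    (Ln : (Fin n → ℝ) → (Fin n → ℝ) → ℝ)
    (hLn : ∀ v w, Ln v w = (1 / n : ℝ) * ∑ i, φ (v i) (w i))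
    (θhatZ : Ω → Fin d → ℝ)
    (hθhatZ : ∀ ω, ∀ θ' : Fin d → ℝ,
      Ln (Z.mulVec (θhatZ ω)) (y ω) ≤ Ln (Z.mulVec θ') (y ω))
    (θhatX : Ω → Fin q → ℝ)
    (hintZ : Integrable (fun ω => Ln (Z.mulVec (θhatZ ω)) (y0 ω)) P)
    (hintX : Integrable (fun ω => Ln (X.mulVec (θhatX ω)) (y0 ω)) P) :
    (∫ ω, Ln (Z.mulVec (θhatZ ω)) (y0 ω) ∂P) - (∫ ω, Ln (X.mulVec (θhatX ω)) (y0 ω) ∂P)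
      ≤ L * Real.sqrt
          ((S.trace - (⨅ i : Fin p, hpsd.isHermitian.eigenvalues i)
              * ∑ i, ∑ j, ((UXᵀ * UZ) i j) ^ 2) / n)
        + 2 * L * σ := by
  set M := (1 - UZ * UZᵀ) * UX
  have hn' : (0 : ℝ) < n := Nat.cast_pos.mpr hn
  have hpoint : ∀ ω, Ln (Z *ᵥ θhatZ ω) (y0 ω) - Ln (X *ᵥ θhatX ω) (y0 ω)
      ≤ L / √n * (√(∑ i, (M *ᵥ θ ω) i ^ 2) + 2 * √(∑ i, ε ω i ^ 2)) := by
    intro ω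
    have hmin : ∀ θ', ∑ i, φ ((Z *ᵥ θhatZ ω) i) (y ω i) ≤ ∑ i, φ ((Z *ᵥ θ') i) (y ω i) :=
      fun θ' => le_of_mul_le_mul_left (by simpa only [hLn] using hθhatZ ω θ') (by positivity)
    have h := mean_loss_sub_le_of_isMinimizer hL hφ1 hφ2 hφmin hUZspan.le hmin (y0 ω) (X *ᵥ θhatX ω)
    simpa [hLn, ← mul_sub, div_eq_inv_mul, hy, hy0, M, mulVec_mulVec] using h
  have hMθ := memLp_sqrt_sum_sq (memLp_mulVec_apply hθL2 M)
  calc (∫ ω, Ln (Z *ᵥ θhatZ ω) (y0 ω) ∂P) - ∫ ω, Ln (X *ᵥ θhatX ω) (y0 ω) ∂P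
      = ∫ ω, (Ln (Z *ᵥ θhatZ ω) (y0 ω) - Ln (X *ᵥ θhatX ω) (y0 ω)) ∂P :=
        (integral_sub hintZ hintX).symm
    _ ≤ ∫ ω, L / √n * (√(∑ i, (M *ᵥ θ ω) i ^ 2) + 2 * √(∑ i, ε ω i ^ 2)) ∂P :=
        integral_mono (hintZ.sub hintX)
          (((hMθ.integrable one_le_two).add (hεint.const_mul 2)).const_mul _) hpoint
    _ = L / √n * (∫ ω, √(∑ i, (M *ᵥ θ ω) i ^ 2) ∂P + 2 * ∫ ω, √(∑ i, ε ω i ^ 2) ∂P) := by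
        rw [integral_const_mul, integral_add (hMθ.integrable one_le_two) (hεint.const_mul 2),
          integral_const_mul]
    _ ≤ L / √n * (√(S.trace - (⨅ i, hpsd.isHermitian.eigenvalues i)
          * ∑ i, ∑ j, (UXᵀ * UZ) i j ^ 2) + 2 * (σ * √n)) := by
        gcongr
        exact integral_sqrt_sum_sq_orthProj_mulVec_le hθL2 hS hpsd.isHermitian hUX hUZorth
    _ = _ := by
        rw [Real.sqrt_div' _ hn'.le]
        field_simp

/-- Generalization bound for downstream linear prediction with product
embeddings (Theorem 1): with labels generated as `y₀ = U_X θ` for a mean-zero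
random vector `θ` with covariance `Σ`, noisy labels `y = y₀ + ε` with
`E[‖ε‖₂] ≤ σ√n`, and empirical-risk minimizers `θ̂_Z`, `θ̂_X` over the
embedding features `Z` (with orthonormal column basis `U_Z`) and the original
features `X` respectively, the average-case excess risk satisfies
`𝓛(Z) − 𝓛(X) ≤ L·√((tr(Σ) − λ_min(Σ)·‖U_Xᵀ U_Z‖_F²)/n) + 2Lσ`. -/
theorem embedding_generalization_bound
    {Ω : Type*} [MeasurableSpace Ω] (P : Measure Ω) [IsProbabilityMeasure P]
    {n p d r q : ℕ} (hn : 0 < n) (hp : 0 < p)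
    (L σ : ℝ) (hL : 0 ≤ L) (hσ : 0 ≤ σ)
    (θ : Ω → Fin p → ℝ)
    (hθmeas : ∀ i, Measurable fun ω => θ ω i)
    (hθL2 : ∀ i, MemLp (fun ω => θ ω i) 2 P)
    (hθmean : ∀ i, ∫ ω, θ ω i ∂P = 0)
    (S : Matrix (Fin p) (Fin p) ℝ)
    (hS : ∀ i j, S i j = ∫ ω, θ ω i * θ ω j ∂P)
    (hpsd : S.PosSemidef)
    (ε : Ω → Fin n → ℝ)
    (hεmeas : ∀ i, Measurable fun ω => ε ω i)
    (hεint : Integrable (fun ω => Real.sqrt (∑ i, (ε ω i) ^ 2)) P)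
    (hεbound : ∫ ω, Real.sqrt (∑ i, (ε ω i) ^ 2) ∂P ≤ σ * Real.sqrt n)
    (UX : Matrix (Fin n) (Fin p) ℝ) (hUX : UXᵀ * UX = 1)
    (Z : Matrix (Fin n) (Fin d) ℝ)
    (UZ : Matrix (Fin n) (Fin r) ℝ) (hUZorth : UZᵀ * UZ = 1)
    (hUZspan : Submodule.span ℝ (Set.range UZᵀ) = Submodule.span ℝ (Set.range Zᵀ))
    (X : Matrix (Fin n) (Fin q) ℝ)
    (φ : ℝ → ℝ → ℝ)
    (hφ1 : ∀ a b y : ℝ, |φ a y - φ b y| ≤ L * |a - b|)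
    (hφ2 : ∀ x a b : ℝ, |φ x a - φ x b| ≤ L * |a - b|)
    (hφmin : ∀ a b : ℝ, φ b b ≤ φ a b)
    (y0 : Ω → Fin n → ℝ) (hy0 : ∀ ω, y0 ω = UX.mulVec (θ ω))
    (y : Ω → Fin n → ℝ) (hy : ∀ ω, y ω = y0 ω + ε ω)
    (Ln : (Fin n → ℝ) → (Fin n → ℝ) → ℝ)
    (hLn : ∀ v w, Ln v w = (1 / n : ℝ) * ∑ i, φ (v i) (w i))
    (θhatZ : Ω → Fin d → ℝ)
    (hθhatZ : ∀ ω, ∀ θ' : Fin d → ℝ,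
      Ln (Z.mulVec (θhatZ ω)) (y ω) ≤ Ln (Z.mulVec θ') (y ω))
    (θhatX : Ω → Fin q → ℝ)
    (hθhatX : ∀ ω, ∀ θ' : Fin q → ℝ,
      Ln (X.mulVec (θhatX ω)) (y ω) ≤ Ln (X.mulVec θ') (y ω))
    (hintZ : Integrable (fun ω => Ln (Z.mulVec (θhatZ ω)) (y0 ω)) P)
    (hintX : Integrable (fun ω => Ln (X.mulVec (θhatX ω)) (y0 ω)) P) :
    (∫ ω, Ln (Z.mulVec (θhatZ ω)) (y0 ω) ∂P) - (∫ ω, Ln (X.mulVec (θhatX ω)) (y0 ω) ∂P)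
      ≤ L * Real.sqrt
          ((S.trace - (⨅ i : Fin p, hpsd.isHermitian.eigenvalues i)
              * ∑ i, ∑ j, ((UXᵀ * UZ) i j) ^ 2) / n)
        + 2 * L * σ :=
  embedding_generalization_bound_general P hn L σ hL θ hθL2 S hS hpsd ε hεint hεbound UX hUX Z UZ
    hUZorth hUZspan X φ hφ1 hφ2 hφmin y0 hy0 y hy Ln hLn θhatZ hθhatZ θhatX hintZ hintX
end
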